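/- Let B and C be the central binomial and Catalan generating functions over ℚ. For every n ≥ 1, the coefficient of z^n in 2zBC + z²B²C² equals 4^{n−1} + (1/2)·binom(2n,n); that is, the number of new type vertices over all right branch new type trees with n edges is 4^{n−1} + (1/2)·binom(2n,n). -/

import Mathlib

/-!
`B = (1 - 4z)^(-1/2)` and `1 - 2zC = (1 - 4z)^(1/2)`. Concretely, the recurrence
`(n + 1) binom(2n+2, n+1) = 2(2n + 1) binom(2n, n)` says `(1 - 4z) B' = 2B`, hence `(1 - 4z) B² = 1`,
while `C = 1 + zC²` gives `(1 - 2zC)² = 1 - 4z`. So `(B (1 - 2zC))² = 1`, and comparing constant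
terms `B (1 - 2zC) = 1`, i.e. `2zBC = B - 1`. Therefore
`4 (2zBC + z²B²C²) = 4(B - 1) + (B - 1)² = B² + 2B - 3`, and `[zⁿ] B² = 4ⁿ`.
-/

open PowerSeries Finset

/-- The central binomial generating function `B = ∑ binom(2n,n) zⁿ` over `ℚ`. -/
noncomputable def Bgf : PowerSeries ℚ := PowerSeries.mk fun n => ((2 * n).choose n : ℚ)

/-- The Catalan generating function `C = ∑ Cₙ zⁿ` over `ℚ`. -/
noncomputable def Cgf : PowerSeries ℚ := PowerSeries.mk fun n => (catalan n : ℚ)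

namespace PowerSeries

variable {R : Type*} [CommSemiring R]

@[simp]
theorem coeff_ofNat_mul (a : ℕ) [a.AtLeastTwo] (f : R⟦X⟧) (n : ℕ) :
    coeff n ((ofNat(a) : R⟦X⟧) * f) = ofNat(a) * coeff n f := by
  rw [← map_ofNat C, coeff_C_mul]

@[simp]
theorem coeff_succ_ofNat (a : ℕ) [a.AtLeastTwo] (n : ℕ) :
    coeff (n + 1) (ofNat(a) : R⟦X⟧) = 0 := by
  rw [← map_ofNat C, coeff_C, if_neg n.succ_ne_zero]

@[simp]
theorem derivative_ofNat (a : ℕ) [a.AtLeastTwo] : d⁄dX R (ofNat(a) : R⟦X⟧) = 0 := by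
  rw [← map_ofNat C, derivative_C]

theorem coeff_X_mul_derivative (f : R⟦X⟧) (n : ℕ) :
    coeff n (X * d⁄dX R f) = n * coeff n f := by
  cases n with
  | zero => simp
  | succ n => rw [coeff_succ_X_mul, coeff_derivative, mul_comm, Nat.cast_succ]

end PowerSeries

theorem coeff_Bgf (n : ℕ) : coeff n Bgf = ((2 * n).choose n : ℚ) := coeff_mk _ _

theorem one_sub_four_X_mul_derivative_Bgf : (1 - 4 * X) * d⁄dX ℚ Bgf = 2 * Bgf := by
  ext n
  have h : ((n + 1 : ℕ) : ℚ) * (n + 1).centralBinom = 2 * (2 * n + 1) * n.centralBinom := by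
    exact_mod_cast Nat.succ_mul_centralBinom_succ n
  push_cast at h
  simp only [sub_mul, one_mul, mul_assoc, map_sub, coeff_ofNat_mul, coeff_X_mul_derivative,
    coeff_derivative, coeff_Bgf, ← Nat.centralBinom_eq_two_mul_choose]
  linear_combination h

theorem one_sub_four_X_mul_Bgf_sq : (1 - 4 * X) * Bgf ^ 2 = 1 := by
  apply derivative.ext
  · simp only [Derivation.leibniz, Derivation.leibniz_pow, smul_eq_mul, nsmul_eq_mul, map_sub,
      Derivation.map_one_eq_zero, derivative_X, derivative_ofNat]
    linear_combination 2 * Bgf * one_sub_four_X_mul_derivative_Bgf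
  · simp [Bgf]

theorem coeff_Bgf_sq (n : ℕ) : coeff n (Bgf ^ 2) = 4 ^ n := by
  induction n with
  | zero => simp [Bgf]
  | succ n ih =>
    have h := congrArg (coeff (n + 1)) one_sub_four_X_mul_Bgf_sq
    rw [sub_mul, one_mul, mul_assoc, map_sub, coeff_ofNat_mul, coeff_succ_X_mul, ih, coeff_one,
      if_neg n.succ_ne_zero] at h
    linear_combination h

theorem Cgf_eq_one_add_X_mul_sq : Cgf = 1 + X * Cgf ^ 2 := by
  ext (_ | n)
  · simp [Cgf]
  · rw [map_add, coeff_succ_X_mul, sq, coeff_mul, coeff_one, if_neg n.succ_ne_zero, zero_add]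
    simp [Cgf, catalan_succ']

theorem one_sub_two_X_mul_Cgf_sq : (1 - 2 * X * Cgf) ^ 2 = 1 - 4 * X := by
  linear_combination (-4 * X) * Cgf_eq_one_add_X_mul_sq

theorem Bgf_mul_one_sub_two_X_mul_Cgf : Bgf * (1 - 2 * X * Cgf) = 1 := by
  have hsq : (Bgf * (1 - 2 * X * Cgf)) * (Bgf * (1 - 2 * X * Cgf)) = 1 := by
    linear_combination Bgf ^ 2 * one_sub_two_X_mul_Cgf_sq + one_sub_four_X_mul_Bgf_sq
  refine (mul_self_eq_one_iff.mp hsq).resolve_right fun h => ?_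
  have := congrArg constantCoeff h
  norm_num [Bgf] at this

/-- For `n ≥ 1`, the number of new type vertices over all right branch new type trees
with `n` edges is `[zⁿ](2zBC + z²B²C²) = 4ⁿ⁻¹ + (1/2)·binom(2n,n)`. -/
theorem stmt13 (n : ℕ) (hn : 1 ≤ n) :
    PowerSeries.coeff n
        (2 * PowerSeries.X * Bgf * Cgf + PowerSeries.X ^ 2 * Bgf ^ 2 * Cgf ^ 2) =
      4 ^ (n - 1) + (1 / 2 : ℚ) * ((2 * n).choose n : ℚ) := by
  obtain ⟨m, rfl⟩ := Nat.exists_eq_add_of_le' hn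
  have hBC : 2 * X * Bgf * Cgf = Bgf - 1 := by
    linear_combination -Bgf_mul_one_sub_two_X_mul_Cgf
  have key : 4 * (2 * X * Bgf * Cgf + X ^ 2 * Bgf ^ 2 * Cgf ^ 2) = Bgf ^ 2 + 2 * Bgf - 3 := by
    linear_combination (2 * X * Bgf * Cgf + Bgf + 3) * hBC
  have h := congrArg (coeff (m + 1)) key
  simp only [coeff_ofNat_mul, map_sub, map_add, coeff_Bgf_sq, coeff_Bgf, coeff_succ_ofNat] at h ⊢
  rw [Nat.add_sub_cancel]
  linear_combination h / 4
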